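/- arXiv:0706.3512 — 2 statements merged into one kernel-verified Lean document; each statement's English description precedes it below -/
import Mathlib

section
/- Let (V, a) be an inner product space, X ∈ V with a(X,X) < 1, and F(y) = √(a(y,y)) + a(X,y) the Randers norm with Cartan tensor C_y. Then for y ≠ 0 and u, v, z ∈ V: 2C_y(z,u,v) = [a(z,u)a(X,v)a(y,y) − a(y,v)a(z,u)a(X,y) + a(X,u)a(z,v)a(y,y) − a(y,v)a(X,u)a(z,y) + a(X,z)a(u,v)a(y,y) − a(y,u)a(X,z)a(v,y) − a(X,y)a(u,y)a(z,v) − a(X,y)a(u,v)a(z,y) − a(X,v)a(u,y)a(z,y)]/(a(y,y)^{3/2}) + 3a(y,v)a(X,y)a(u,y)a(z,y)/(a(y,y)^{5/2}). -/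
open scoped RealInnerProductSpace

/-- The fundamental tensor of a Minkowski norm:
`g_y(u,v) = (1/2) d^2/ds dt [F^2(y+su+tv)]` at `s=t=0`. -/
noncomputable def fund {V : Type*} [AddCommGroup V] [Module ℝ V]
    (F : V → ℝ) (y u v : V) : ℝ :=
  (1/2) * deriv (fun s : ℝ => deriv (fun t : ℝ => (F (y + s • u + t • v))^2) 0) 0

/-- The Cartan tensor: `C_y(u,v,w) = (1/2) d/dt [g_{y+tw}(u,v)]` at `t=0`. -/
noncomputable def cartan {V : Type*} [AddCommGroup V] [Module ℝ V]
    (F : V → ℝ) (y u v w : V) : ℝ :=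
  (1/2) * deriv (fun t : ℝ => fund F (y + t • w) u v) 0

/-!
Away from the origin `F = ‖·‖ + ⟪X, ·⟫` is smooth, and every derivative in the definitions of
`fund` and `cartan` is taken along a line `t ↦ y + t • w` through a point `y ≠ 0`, near which the
integrand agrees with an explicit expression. Differentiating `F²` twice gives
`g_y(u, v) = dF_y(u) dF_y(v) + F(y) D²‖·‖_y(u, v)`; one more derivative along `w` gives
`2 C_y(u, v, w) = D²‖·‖_y(u, w) dF_y(v) + dF_y(u) D²‖·‖_y(v, w) + dF_y(w) D²‖·‖_y(u, v)
  + F(y) D³‖·‖_y(u, v, w)`, which expands to the stated formula.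
-/

open Filter Topology

section

variable {V : Type*} [NormedAddCommGroup V] [InnerProductSpace ℝ V]

noncomputable def randersNorm (X y : V) : ℝ := ‖y‖ + ⟪X, y⟫

noncomputable def randersNormDeriv (X y w : V) : ℝ := ⟪w, y⟫ / ‖y‖ + ⟪X, w⟫

noncomputable def normHessian (y u v : V) : ℝ := ⟪u, v⟫ / ‖y‖ - ⟪u, y⟫ * ⟪v, y⟫ / ‖y‖ ^ 3

noncomputable def normThirdDeriv (y u v w : V) : ℝ :=
  3 * ⟪u, y⟫ * ⟪v, y⟫ * ⟪w, y⟫ / ‖y‖ ^ 5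
    - (⟪u, v⟫ * ⟪w, y⟫ + ⟪u, w⟫ * ⟪v, y⟫ + ⟪v, w⟫ * ⟪u, y⟫) / ‖y‖ ^ 3

theorem hasDerivAt_line (y w : V) (t : ℝ) : HasDerivAt (fun t : ℝ => y + t • w) w t := by
  simpa using ((hasDerivAt_id t).smul_const w).const_add y

theorem hasDerivAt_inner_line (c y w : V) (t : ℝ) :
    HasDerivAt (fun t : ℝ => ⟪c, y + t • w⟫) ⟪c, w⟫ t := by
  simpa using (hasDerivAt_const t c).inner ℝ (hasDerivAt_line y w t)

theorem eventually_line_ne_zero {y : V} (hy : y ≠ 0) (w : V) :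
    ∀ᶠ t in 𝓝 (0 : ℝ), y + t • w ≠ 0 :=
  (hasDerivAt_line y w 0).continuousAt.eventually_ne (by simpa using hy)

theorem normHessian_comm (y u v : V) : normHessian y u v = normHessian y v u := by
  simp only [normHessian, real_inner_comm u v]
  ring

variable {y : V} (hy : y ≠ 0)
include hy

theorem hasDerivAt_norm_line (w : V) :
    HasDerivAt (fun t : ℝ => ‖y + t • w‖) (⟪w, y⟫ / ‖y‖) 0 := by
  have hsq := (hasDerivAt_line y w 0).norm_sq
  have hy2 : ‖y + (0 : ℝ) • w‖ ^ 2 ≠ 0 := by simpa using hy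
  convert hsq.sqrt hy2 using 1
  · simp [Real.sqrt_sq (norm_nonneg _)]
  · simp only [zero_smul, add_zero, Real.sqrt_sq (norm_nonneg _), real_inner_comm]
    have : ‖y‖ ≠ 0 := norm_ne_zero_iff.mpr hy
    field_simp

theorem hasDerivAt_inner_div_norm_line (c w : V) :
    HasDerivAt (fun t : ℝ => ⟪c, y + t • w⟫ / ‖y + t • w‖) (normHessian y c w) 0 := by
  have hn : ‖y‖ ≠ 0 := norm_ne_zero_iff.mpr hy
  refine ((hasDerivAt_inner_line c y w 0).fun_div (hasDerivAt_norm_line hy w)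
    (by simpa using hn)).congr_deriv ?_
  simp only [normHessian, zero_smul, add_zero]
  field_simp

theorem hasDerivAt_randersNorm_line (X w : V) :
    HasDerivAt (fun t : ℝ => randersNorm X (y + t • w)) (randersNormDeriv X y w) 0 :=
  (hasDerivAt_norm_line hy w).add (hasDerivAt_inner_line X y w 0)

theorem hasDerivAt_randersNormDeriv_line (X v w : V) :
    HasDerivAt (fun t : ℝ => randersNormDeriv X (y + t • w) v) (normHessian y v w) 0 := by
  simp only [randersNormDeriv, real_inner_comm v]
  exact (hasDerivAt_inner_div_norm_line hy v w).add_const _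

theorem hasDerivAt_normHessian_line (u v w : V) :
    HasDerivAt (fun t : ℝ => normHessian (y + t • w) u v) (normThirdDeriv y u v w) 0 := by
  have hn : ‖y‖ ≠ 0 := norm_ne_zero_iff.mpr hy
  have hr := hasDerivAt_norm_line hy w
  refine (((hasDerivAt_const (0 : ℝ) ⟪u, v⟫).fun_div hr (by simpa using hn)).sub
    (((hasDerivAt_inner_line u y w 0).fun_mul (hasDerivAt_inner_line v y w 0)).fun_div
      (hr.fun_pow 3) (by simpa using hn))).congr_deriv ?_
  simp only [normThirdDeriv, zero_smul, add_zero]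
  field_simp
  ring

theorem hasDerivAt_line_of_eq_of_ne_zero {f g : V → ℝ} {g' : ℝ} (w : V)
    (hfg : ∀ p ≠ 0, f p = g p) (hg : HasDerivAt (fun t : ℝ => g (y + t • w)) g' 0) :
    HasDerivAt (fun t : ℝ => f (y + t • w)) g' 0 :=
  hg.congr_of_eventuallyEq <| (eventually_line_ne_zero hy w).mono fun _ ht => hfg _ ht

theorem deriv_randersNorm_sq_line (X v : V) :
    deriv (fun t : ℝ => randersNorm X (y + t • v) ^ 2) 0
      = 2 * randersNorm X y * randersNormDeriv X y v := by
  rw [((hasDerivAt_randersNorm_line hy X v).fun_pow 2).deriv]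
  simp only [zero_smul, add_zero]
  ring

theorem fund_randersNorm (X u v : V) :
    fund (randersNorm X) y u v
      = randersNormDeriv X y u * randersNormDeriv X y v + randersNorm X y * normHessian y u v := by
  have hd := hasDerivAt_line_of_eq_of_ne_zero hy
    (f := fun p => deriv (fun t : ℝ => randersNorm X (p + t • v) ^ 2) 0) u
    (fun p hp => deriv_randersNorm_sq_line hp X v)
    (((hasDerivAt_randersNorm_line hy X u).const_mul 2).fun_mul
      (hasDerivAt_randersNormDeriv_line hy X v u))
  rw [fund, hd.deriv, normHessian_comm]
  simp only [zero_smul, add_zero]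
  ring

theorem two_mul_cartan_randersNorm (X u v w : V) :
    2 * cartan (randersNorm X) y u v w
      = normHessian y u w * randersNormDeriv X y v
        + randersNormDeriv X y u * normHessian y v w
        + randersNormDeriv X y w * normHessian y u v
        + randersNorm X y * normThirdDeriv y u v w := by
  have hd := hasDerivAt_line_of_eq_of_ne_zero hy (f := fun p => fund (randersNorm X) p u v) w
    (fun p hp => fund_randersNorm hp X u v)
    (((hasDerivAt_randersNormDeriv_line hy X u w).fun_mul
      (hasDerivAt_randersNormDeriv_line hy X v w)).add
      ((hasDerivAt_randersNorm_line hy X w).fun_mul (hasDerivAt_normHessian_line hy u v w)))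
  rw [cartan, hd.deriv]
  simp only [zero_smul, add_zero]
  ring

end

theorem randers_cartan_formula_general
    {V : Type*} [NormedAddCommGroup V] [InnerProductSpace ℝ V]
    (X : V)
    (F : V → ℝ) (hF : ∀ w : V, F w = Real.sqrt ⟪w, w⟫ + ⟪X, w⟫) :
    ∀ y : V, y ≠ 0 → ∀ u v z : V,
      2 * cartan F y z u v =
        (⟪z, u⟫ * ⟪X, v⟫ * ⟪y, y⟫ - ⟪y, v⟫ * ⟪z, u⟫ * ⟪X, y⟫
          + ⟪X, u⟫ * ⟪z, v⟫ * ⟪y, y⟫ - ⟪y, v⟫ * ⟪X, u⟫ * ⟪z, y⟫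
          + ⟪X, z⟫ * ⟪u, v⟫ * ⟪y, y⟫ - ⟪y, u⟫ * ⟪X, z⟫ * ⟪v, y⟫
          - ⟪X, y⟫ * ⟪u, y⟫ * ⟪z, v⟫ - ⟪X, y⟫ * ⟪u, v⟫ * ⟪z, y⟫
          - ⟪X, v⟫ * ⟪u, y⟫ * ⟪z, y⟫) / (⟪y, y⟫ * Real.sqrt ⟪y, y⟫)
        + 3 * ⟪y, v⟫ * ⟪X, y⟫ * ⟪u, y⟫ * ⟪z, y⟫
            / (⟪y, y⟫^2 * Real.sqrt ⟪y, y⟫) := by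
  intro y hy u v z
  obtain rfl : F = randersNorm X :=
    funext fun w => by rw [hF, randersNorm, norm_eq_sqrt_real_inner]
  have hn : ‖y‖ ≠ 0 := norm_ne_zero_iff.mpr hy
  rw [two_mul_cartan_randersNorm hy, ← norm_eq_sqrt_real_inner, real_inner_self_eq_norm_sq]
  simp only [randersNorm, randersNormDeriv, normHessian, normThirdDeriv, real_inner_comm y]
  field_simp
  ring

/-- explicit formula for the Cartan tensor of a Randers norm. -/
theorem randers_cartan_formula
    {V : Type*} [NormedAddCommGroup V] [InnerProductSpace ℝ V] [FiniteDimensional ℝ V]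
    (X : V) (hX : ⟪X, X⟫ < 1)
    (F : V → ℝ) (hF : ∀ w : V, F w = Real.sqrt ⟪w, w⟫ + ⟪X, w⟫) :
    ∀ y : V, y ≠ 0 → ∀ u v z : V,
      2 * cartan F y z u v =
        (⟪z, u⟫ * ⟪X, v⟫ * ⟪y, y⟫ - ⟪y, v⟫ * ⟪z, u⟫ * ⟪X, y⟫
          + ⟪X, u⟫ * ⟪z, v⟫ * ⟪y, y⟫ - ⟪y, v⟫ * ⟪X, u⟫ * ⟪z, y⟫
          + ⟪X, z⟫ * ⟪u, v⟫ * ⟪y, y⟫ - ⟪y, u⟫ * ⟪X, z⟫ * ⟪v, y⟫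
          - ⟪X, y⟫ * ⟪u, y⟫ * ⟪z, v⟫ - ⟪X, y⟫ * ⟪u, v⟫ * ⟪z, y⟫
          - ⟪X, v⟫ * ⟪u, y⟫ * ⟪z, y⟫) / (⟪y, y⟫ * Real.sqrt ⟪y, y⟫)
        + 3 * ⟪y, v⟫ * ⟪X, y⟫ * ⟪u, y⟫ * ⟪z, y⟫
            / (⟪y, y⟫^2 * Real.sqrt ⟪y, y⟫) :=
  randers_cartan_formula_general X F hF
end

section
/- Let F be a Minkowski norm on a finite-dimensional real vector space V invariant under a one-parameter group of linear maps: F(exp(tA)w) = F(w) for all t ∈ ℝ, w ∈ V, where A is a linear endomorphism of V. Then for all y ≠ 0 and u,v ∈ V: g_y(Au, v) + g_y(u, Av) + 2C_y(Ay, u, v) = 0. -/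
open scoped RealInnerProductSpace

section Aux

variable {V : Type*} [NormedAddCommGroup V] [NormedSpace ℝ V]

lemma line_hasDerivAt (x v : V) : HasDerivAt (fun t : ℝ => x + t • v) v 0 := by
  simpa using ((hasDerivAt_id (0:ℝ)).smul_const v).const_add x

lemma eventually_line_ne {x : V} (hx : x ≠ 0) (v : V) :
    ∀ᶠ t : ℝ in nhds 0, x + t • v ≠ 0 := by
  have hc : ContinuousAt (fun t : ℝ => x + t • v) 0 := by fun_prop
  have := hc.eventually_ne (by simpa using hx)
  simpa using this

lemma fund_eq {F : V → ℝ} (hF : ContDiffOn ℝ (⊤ : ℕ∞) F {(0:V)}ᶜ) {y : V} (hy : y ≠ 0) (u v : V) :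
    fund F y u v
      = (1/2) * (fderiv ℝ (fderiv ℝ (fun w => (F w)^2)) y u v) := by
  set G : V → ℝ := fun w => (F w)^2 with hG
  have hGx : ∀ x : V, x ≠ 0 → ContDiffAt ℝ (⊤ : ℕ∞) G x := fun x hx =>
    (hF.contDiffAt (isOpen_compl_singleton.mem_nhds (by simpa using hx))).pow 2
  have hinner : ∀ s : ℝ, y + s • u ≠ 0 →
      deriv (fun t : ℝ => G (y + s • u + t • v)) 0 = fderiv ℝ G (y + s • u) v := by
    intro s hs
    have hc := line_hasDerivAt (y + s • u) v
    have hGd : DifferentiableAt ℝ G (y + s • u) := (hGx _ hs).differentiableAt (by simp)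
    have hGf : HasFDerivAt G (fderiv ℝ G (y + s • u)) (y + s • u + (0:ℝ) • v) := by
      simpa using hGd.hasFDerivAt
    simpa [Function.comp_def] using (hGf.comp_hasDerivAt 0 hc).deriv
  have hev : (fun s : ℝ => deriv (fun t : ℝ => G (y + s • u + t • v)) 0)
      =ᶠ[nhds 0] (fun s : ℝ => fderiv ℝ G (y + s • u) v) := by
    filter_upwards [eventually_line_ne hy u] with s hs using hinner s hs
  have hD1d : DifferentiableAt ℝ (fderiv ℝ G) y :=
    ((hGx y hy).fderiv_right (m := (⊤ : ℕ∞)) (by simp)).differentiableAt (by simp)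
  have houter : HasDerivAt (fun s : ℝ => fderiv ℝ G (y + s • u) v)
      (fderiv ℝ (fderiv ℝ G) y u v) 0 := by
    have h1 : HasDerivAt (fun s : ℝ => fderiv ℝ G (y + s • u))
        (fderiv ℝ (fderiv ℝ G) y u) 0 := by
      have hD1f : HasFDerivAt (fderiv ℝ G) (fderiv ℝ (fderiv ℝ G) y) (y + (0:ℝ) • u) := by
        simpa using hD1d.hasFDerivAt
      simpa [Function.comp_def] using hD1f.comp_hasDerivAt 0 (line_hasDerivAt y u)
    simpa using h1.clm_apply (hasDerivAt_const 0 v)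
  have : deriv (fun s : ℝ => deriv (fun t : ℝ => G (y + s • u + t • v)) 0) 0
      = fderiv ℝ (fderiv ℝ G) y u v := by
    rw [hev.deriv_eq]; exact houter.deriv
  simpa [fund, hG] using congrArg (fun r => (1/2 : ℝ) * r) this

variable {F G : V → ℝ} (hGx : ∀ x : V, x ≠ 0 → ContDiffAt ℝ (⊤ : ℕ∞) G x)
include hGx

lemma cartan_eq'
    (hfund : ∀ x : V, x ≠ 0 → ∀ u v : V,
      fund F x u v = (1/2) * (fderiv ℝ (fderiv ℝ G) x u v))
    {y : V} (hy : y ≠ 0) (u v w : V) :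
    cartan F y u v w = (1/4) * (fderiv ℝ (fderiv ℝ (fderiv ℝ G)) y w u v) := by
  have hD2d : DifferentiableAt ℝ (fderiv ℝ (fderiv ℝ G)) y :=
    ((((hGx y hy).fderiv_right (m := (⊤ : ℕ∞)) (by simp)).fderiv_right (m := (⊤ : ℕ∞)) (by simp))).differentiableAt (by simp)
  have h1 : HasDerivAt (fun t : ℝ => fderiv ℝ (fderiv ℝ G) (y + t • w))
      (fderiv ℝ (fderiv ℝ (fderiv ℝ G)) y w) 0 := by
    have hD2f : HasFDerivAt (fderiv ℝ (fderiv ℝ G))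
        (fderiv ℝ (fderiv ℝ (fderiv ℝ G)) y) (y + (0:ℝ) • w) := by
      simpa using hD2d.hasFDerivAt
    simpa [Function.comp_def] using hD2f.comp_hasDerivAt (E := V →L[ℝ] V →L[ℝ] ℝ) 0 (line_hasDerivAt y w)
  have h2 : HasDerivAt (fun t : ℝ => fderiv ℝ (fderiv ℝ G) (y + t • w) u v)
      (fderiv ℝ (fderiv ℝ (fderiv ℝ G)) y w u v) 0 := by
    simpa using (h1.clm_apply (hasDerivAt_const 0 u)).clm_apply (hasDerivAt_const 0 v)
  have h3 := h2.const_mul (1/2 : ℝ)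
  have hev : (fun t : ℝ => fund F (y + t • w) u v)
      =ᶠ[nhds 0] (fun t : ℝ => (1/2) * (fderiv ℝ (fderiv ℝ G) (y + t • w) u v)) := by
    filter_upwards [eventually_line_ne hy w] with t ht using hfund _ ht u v
  have : deriv (fun t : ℝ => fund F (y + t • w) u v) 0
      = (1/2) * (fderiv ℝ (fderiv ℝ (fderiv ℝ G)) y w u v) := by
    rw [hev.deriv_eq]; exact h3.deriv
  rw [cartan, this]; ring

lemma D3_cyclic {y : V} (hy : y ≠ 0) (a b c : V) :
    fderiv ℝ (fderiv ℝ (fderiv ℝ G)) y a b c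
      = fderiv ℝ (fderiv ℝ (fderiv ℝ G)) y b c a := by
  have swap12 : ∀ a b : V, fderiv ℝ (fderiv ℝ (fderiv ℝ G)) y a b
      = fderiv ℝ (fderiv ℝ (fderiv ℝ G)) y b a :=
    (((hGx y hy).fderiv_right (m := (⊤ : ℕ∞)) (by simp)).isSymmSndFDerivAt (by rw [minSmoothness_of_isRCLikeNormedField]; exact WithTop.coe_le_coe.mpr (le_top : (2:ℕ∞) ≤ ⊤))).eq
  have hD2d : DifferentiableAt ℝ (fderiv ℝ (fderiv ℝ G)) y :=
    ((((hGx y hy).fderiv_right (m := (⊤ : ℕ∞)) (by simp)).fderiv_right (m := (⊤ : ℕ∞)) (by simp))).differentiableAt (by simp)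
  have key : ∀ b c : V, fderiv ℝ (fun x => fderiv ℝ (fderiv ℝ G) x b c) y
      = ((ContinuousLinearMap.apply ℝ ℝ c).comp
          (ContinuousLinearMap.apply ℝ (V →L[ℝ] ℝ) b)).comp
          (fderiv ℝ (fderiv ℝ (fderiv ℝ G)) y) := by
    intro b c
    exact (((ContinuousLinearMap.apply ℝ ℝ c).comp
      (ContinuousLinearMap.apply ℝ (V →L[ℝ] ℝ) b)).hasFDerivAt.comp (F := V →L[ℝ] V →L[ℝ] ℝ)
        (f := fderiv ℝ (fderiv ℝ G)) (f' := fderiv ℝ (fderiv ℝ (fderiv ℝ G)) y) y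
      hD2d.hasFDerivAt).fderiv
  have swap23 : ∀ a b c : V, fderiv ℝ (fderiv ℝ (fderiv ℝ G)) y a b c
      = fderiv ℝ (fderiv ℝ (fderiv ℝ G)) y a c b := by
    intro a b c
    have hev : (fun x => fderiv ℝ (fderiv ℝ G) x b c)
        =ᶠ[nhds y] (fun x => fderiv ℝ (fderiv ℝ G) x c b) := by
      filter_upwards [isOpen_compl_singleton.eventually_mem
        (show y ∈ {(0:V)}ᶜ by simpa using hy)] with x hx
      exact ((hGx x (by simpa using hx)).isSymmSndFDerivAt (by rw [minSmoothness_of_isRCLikeNormedField]; exact WithTop.coe_le_coe.mpr (le_top : (2:ℕ∞) ≤ ⊤))).eq b c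
    have h := hev.fderiv_eq (𝕜 := ℝ)
    rw [key b c, key c b] at h
    have := congrArg (fun L : V →L[ℝ] ℝ => L a) h
    simpa using this
  calc fderiv ℝ (fderiv ℝ (fderiv ℝ G)) y a b c
      = fderiv ℝ (fderiv ℝ (fderiv ℝ G)) y b a c := by
        exact congrArg (fun L : V →L[ℝ] ℝ => L c) (swap12 a b)
    _ = fderiv ℝ (fderiv ℝ (fderiv ℝ G)) y b c a := swap23 b a c

omit hGx in
lemma D2_invariant
    (hGx : ∀ x : V, x ≠ 0 → ContDiffAt ℝ (⊤ : ℕ∞) G x)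
    (L L' : V →L[ℝ] V) (hL' : ∀ w, L' (L w) = w)
    (hinv : ∀ w, G (L w) = G w) {y : V} (hy : y ≠ 0) (u v : V) :
    fderiv ℝ (fderiv ℝ G) y u v = fderiv ℝ (fderiv ℝ G) (L y) (L u) (L v) := by
  have hLne : ∀ x : V, x ≠ 0 → L x ≠ 0 := by
    intro x hx h
    exact hx (by rw [← hL' x, h, map_zero])
  have hGL : G ∘ L = G := funext hinv
  have hD1 : ∀ x : V, x ≠ 0 → fderiv ℝ G x = (fderiv ℝ G (L x)).comp L := by
    intro x hx
    conv_lhs => rw [← hGL]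
    rw [fderiv_comp x ((hGx _ (hLne x hx)).differentiableAt (by simp)) L.differentiableAt,
      L.fderiv]
  set CR : (V →L[ℝ] ℝ) →L[ℝ] (V →L[ℝ] ℝ) := (ContinuousLinearMap.compL ℝ V V ℝ).flip L
    with hCR
  have hCRa : ∀ M : V →L[ℝ] ℝ, CR M = M.comp L := fun M => rfl
  have hevent : fderiv ℝ G =ᶠ[nhds y] (fun x => CR (fderiv ℝ G (L x))) := by
    filter_upwards [isOpen_compl_singleton.eventually_mem
      (show y ∈ {(0:V)}ᶜ by simpa using hy)] with x hx
    rw [hD1 x (by simpa using hx), hCRa]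
  have hD1dL : DifferentiableAt ℝ (fderiv ℝ G) (L y) :=
    ((hGx _ (hLne y hy)).fderiv_right (m := (⊤ : ℕ∞)) (by simp)).differentiableAt (by simp)
  have h2 : HasFDerivAt (fun x => CR (fderiv ℝ G (L x)))
      (CR.comp ((fderiv ℝ (fderiv ℝ G) (L y)).comp L)) y :=
    CR.hasFDerivAt.comp y ((hD1dL.hasFDerivAt).comp y L.hasFDerivAt)
  have h3 : fderiv ℝ (fderiv ℝ G) y = CR.comp ((fderiv ℝ (fderiv ℝ G) (L y)).comp L) := by
    rw [hevent.fderiv_eq (𝕜 := ℝ)]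
    exact h2.fderiv
  rw [h3]
  simp [hCRa]

end Aux

section Exp

variable {V : Type*} [NormedAddCommGroup V] [NormedSpace ℝ V] [FiniteDimensional ℝ V]

lemma exp_left_inv (A : V →L[ℝ] V) (t : ℝ) (w : V) :
    NormedSpace.exp (-(t • A)) (NormedSpace.exp (t • A) w) = w := by
  have : CompleteSpace V := FiniteDimensional.complete ℝ V
  letI : NormedAlgebra ℚ (V →L[ℝ] V) := .restrictScalars ℚ ℝ _
  have hmul : NormedSpace.exp (-(t • A)) * NormedSpace.exp (t • A) = 1 := by
    rw [← NormedSpace.exp_add_of_commute ((Commute.refl (t • A)).neg_left)]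
    simp
  calc NormedSpace.exp (-(t • A)) (NormedSpace.exp (t • A) w)
      = (NormedSpace.exp (-(t • A)) * NormedSpace.exp (t • A)) w := rfl
    _ = w := by rw [hmul]; rfl

lemma exp_apply_hasDerivAt (A : V →L[ℝ] V) (w : V) :
    HasDerivAt (fun t : ℝ => NormedSpace.exp (t • A) w) (A w) 0 := by
  have : CompleteSpace V := FiniteDimensional.complete ℝ V
  have h := hasDerivAt_exp_smul_const (𝕂 := ℝ) A 0
  have h2 := (ContinuousLinearMap.apply ℝ V w).hasFDerivAt.comp_hasDerivAt 0 h
  simpa [Function.comp_def] using h2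

end Exp

/-- infinitesimal invariance identity for a Minkowski norm
invariant under the one-parameter group exp(tA). -/
theorem infinitesimal_invariance
    {V : Type*} [NormedAddCommGroup V] [NormedSpace ℝ V] [FiniteDimensional ℝ V]
    (F : V → ℝ)
    (hF_smooth : ContDiffOn ℝ (⊤ : ℕ∞) F {(0:V)}ᶜ)
    (hF_homog : ∀ t : ℝ, 0 ≤ t → ∀ y : V, F (t • y) = t * F y)
    (hF_posdef : ∀ y : V, y ≠ 0 → ∀ u : V, u ≠ 0 → 0 < fund F y u u)
    (A : V →L[ℝ] V)
    (hA_inv : ∀ t : ℝ, ∀ w : V, F (NormedSpace.exp (t • A) w) = F w) :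
    ∀ y : V, y ≠ 0 → ∀ u v : V,
      fund F y (A u) v + fund F y u (A v) + 2 * cartan F y (A y) u v = 0 := by
  intro y hy u v
  have hGx : ∀ x : V, x ≠ 0 → ContDiffAt ℝ (⊤ : ℕ∞) (fun w => (F w)^2) x := fun x hx =>
    (hF_smooth.contDiffAt (isOpen_compl_singleton.mem_nhds (by simpa using hx))).pow 2
  have hfund : ∀ x : V, x ≠ 0 → ∀ a b : V,
      fund F x a b = (1/2) * (fderiv ℝ (fderiv ℝ (fun w => (F w)^2)) x a b) :=
    fun x hx => fund_eq hF_smooth hx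
  -- invariance of the second derivative along the flow
  have hΦ : ∀ t : ℝ,
      fderiv ℝ (fderiv ℝ (fun w => (F w)^2)) (NormedSpace.exp (t • A) y)
          (NormedSpace.exp (t • A) u) (NormedSpace.exp (t • A) v)
        = fderiv ℝ (fderiv ℝ (fun w => (F w)^2)) y u v := by
    intro t
    exact (D2_invariant hGx (NormedSpace.exp (t • A)) (NormedSpace.exp (-(t • A)))
      (exp_left_inv A t) (fun w => by simp [hA_inv]) hy u v).symm
  -- differentiate at t = 0
  have hD2d : DifferentiableAt ℝ (fderiv ℝ (fderiv ℝ (fun w => (F w)^2))) y :=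
    ((((hGx y hy).fderiv_right (m := (⊤ : ℕ∞)) (by simp)).fderiv_right (m := (⊤ : ℕ∞)) (by simp))).differentiableAt (by simp)
  have h1 : HasDerivAt
      (fun t : ℝ => fderiv ℝ (fderiv ℝ (fun w => (F w)^2)) (NormedSpace.exp (t • A) y))
      (fderiv ℝ (fderiv ℝ (fderiv ℝ (fun w => (F w)^2))) y (A y)) 0 := by
    have hD2f : HasFDerivAt (fderiv ℝ (fderiv ℝ (fun w => (F w)^2)))
        (fderiv ℝ (fderiv ℝ (fderiv ℝ (fun w => (F w)^2))) y)
        (NormedSpace.exp ((0:ℝ) • A) y) := by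
      simpa using hD2d.hasFDerivAt
    simpa [Function.comp_def] using hD2f.comp_hasDerivAt (E := V →L[ℝ] V →L[ℝ] ℝ) 0 (exp_apply_hasDerivAt A y)
  have h2 : HasDerivAt
      (fun t : ℝ => fderiv ℝ (fderiv ℝ (fun w => (F w)^2)) (NormedSpace.exp (t • A) y)
        (NormedSpace.exp (t • A) u))
      (fderiv ℝ (fderiv ℝ (fderiv ℝ (fun w => (F w)^2))) y (A y) u
        + fderiv ℝ (fderiv ℝ (fun w => (F w)^2)) y (A u)) 0 := by
    simpa using h1.clm_apply (exp_apply_hasDerivAt A u)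
  have h3 : HasDerivAt
      (fun t : ℝ => fderiv ℝ (fderiv ℝ (fun w => (F w)^2)) (NormedSpace.exp (t • A) y)
        (NormedSpace.exp (t • A) u) (NormedSpace.exp (t • A) v))
      (fderiv ℝ (fderiv ℝ (fderiv ℝ (fun w => (F w)^2))) y (A y) u v
        + fderiv ℝ (fderiv ℝ (fun w => (F w)^2)) y (A u) v
        + fderiv ℝ (fderiv ℝ (fun w => (F w)^2)) y u (A v)) 0 := by
    simpa [add_assoc] using h2.clm_apply (exp_apply_hasDerivAt A v)
  have hconstfun : (fun t : ℝ =>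
      fderiv ℝ (fderiv ℝ (fun w => (F w)^2)) (NormedSpace.exp (t • A) y)
        (NormedSpace.exp (t • A) u) (NormedSpace.exp (t • A) v))
      = fun _ : ℝ => fderiv ℝ (fderiv ℝ (fun w => (F w)^2)) y u v := funext hΦ
  rw [hconstfun] at h3
  have hzero : fderiv ℝ (fderiv ℝ (fderiv ℝ (fun w => (F w)^2))) y (A y) u v
      + fderiv ℝ (fderiv ℝ (fun w => (F w)^2)) y (A u) v
      + fderiv ℝ (fderiv ℝ (fun w => (F w)^2)) y u (A v) = 0 :=
    h3.unique (hasDerivAt_const 0 _)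
  have e1 := hfund y hy (A u) v
  have e2 := hfund y hy u (A v)
  have e3 := cartan_eq' hGx hfund hy (A y) u v
  have e4 := D3_cyclic hGx hy v (A y) u
  rw [e1, e2, e3, e4]
  linarith [hzero]
end
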